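/- Let Σ be a rational pointed fan in ℝ^d, K a field, I a ℤ^d-graded (monomial) ideal of K[Σ], and let Σ' = {C ∈ Σ : relint(C) ∩ ℤ^d ∩ Supp(I) = ∅}, where Supp(I) = {a ∈ ℤ^d : x^a ∈ I}. Assume that for every C ∈ Σ either relint(C) ∩ ℤ^d ⊆ Supp(I) or relint(C) ∩ ℤ^d ∩ Supp(I) = ∅. Then Σ' is a subfan of Σ, i.e., Σ' is closed under taking faces. -/

import Mathlib

open scoped BigOperators Classical

noncomputable section

/-- The coercion of an integer point to a real point. -/
def Z2R {d : ℕ} (a : Fin d → ℤ) : Fin d → ℝ := fun i => (a i : ℝ)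

/-- The conical hull of a finite set of vectors. -/
def conicalHull {d : ℕ} (S : Finset (Fin d → ℝ)) : Set (Fin d → ℝ) :=
  {x | ∃ c : (Fin d → ℝ) → ℝ, (∀ v, 0 ≤ c v) ∧ x = ∑ v ∈ S, c v • v}

/-- A rational (polyhedral) cone: the conical hull of finitely many rational vectors. -/
def IsRatCone {d : ℕ} (C : Set (Fin d → ℝ)) : Prop :=
  ∃ S : Finset (Fin d → ℝ), (∀ v ∈ S, ∀ i, ∃ q : ℚ, v i = (q : ℝ)) ∧ C = conicalHull S

/-- A pointed cone contains no line. -/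
def IsPointedSet {d : ℕ} (C : Set (Fin d → ℝ)) : Prop :=
  ∀ x ∈ C, -x ∈ C → x = 0

/-- A rational pointed cone. -/
def IsRatPointedCone {d : ℕ} (C : Set (Fin d → ℝ)) : Prop :=
  IsRatCone C ∧ IsPointedSet C

/-- A convex cone (containing the origin). -/
def IsConvexCone {d : ℕ} (C : Set (Fin d → ℝ)) : Prop :=
  0 ∈ C ∧ (∀ x ∈ C, ∀ y ∈ C, x + y ∈ C) ∧ ∀ x ∈ C, ∀ t : ℝ, 0 ≤ t → t • x ∈ C

/-- `C'` is a face of the cone `C`. -/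
def IsFaceOf {d : ℕ} (C' C : Set (Fin d → ℝ)) : Prop :=
  IsConvexCone C' ∧ C' ⊆ C ∧ ∀ x ∈ C, ∀ y ∈ C, x + y ∈ C' → x ∈ C' ∧ y ∈ C'

/-- A rational pointed fan in `ℝ^d`. -/
structure Fan (d : ℕ) where
  cones : Set (Set (Fin d → ℝ))
  finite : cones.Finite
  pointed : ∀ C ∈ cones, IsRatPointedCone C
  faces_mem : ∀ C ∈ cones, ∀ C', IsFaceOf C' C → C' ∈ cones
  inter_face : ∀ C ∈ cones, ∀ C' ∈ cones, IsFaceOf (C ∩ C') C ∧ IsFaceOf (C ∩ C') C'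

/-- The dimension of a cone. -/
def coneDim {d : ℕ} (C : Set (Fin d → ℝ)) : ℕ :=
  Module.finrank ℝ (Submodule.span ℝ C)

/-- The dimension of a fan. -/
def Fan.dim {d : ℕ} (Φ : Fan d) : ℕ := sSup (coneDim '' Φ.cones)

/-- The set of lattice points in the support of a fan. -/
def Fan.supp {d : ℕ} (Φ : Fan d) : Set (Fin d → ℤ) :=
  {a | ∃ C ∈ Φ.cones, Z2R a ∈ C}

/-- The relative interior of a cone. -/
def relint {d : ℕ} (C : Set (Fin d → ℝ)) : Set (Fin d → ℝ) := intrinsicInterior ℝ C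

section ToricFaceRing

variable (K : Type) [Field K] {d : ℕ} (Φ : Fan d)

/-- The ambient polynomial ring: the monoid algebra of the free commutative
monoid on the lattice points of the support of the fan. -/
abbrev Fan.polyRing := AddMonoidAlgebra K (↥Φ.supp →₀ ℕ)

/-- The monomial of the ambient polynomial ring corresponding to a lattice point. -/
def Fan.X (m : ↥Φ.supp) : Φ.polyRing K :=
  AddMonoidAlgebra.single (Finsupp.single m 1) (1 : K)

/-- Auxiliary monomial: zero if the point is not in the support. -/
def Fan.Xaux (a : Fin d → ℤ) : Φ.polyRing K :=
  if h : a ∈ Φ.supp then Φ.X K ⟨a, h⟩ else 0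

/-- The defining relations of the toric face ring. -/
def Fan.relIdeal : Ideal (Φ.polyRing K) :=
  Ideal.span
    ({z | ∃ a b : ↥Φ.supp, (∃ C ∈ Φ.cones, Z2R a.1 ∈ C ∧ Z2R b.1 ∈ C) ∧
        z = Φ.X K a * Φ.X K b - Φ.Xaux K (a.1 + b.1)} ∪
     {z | ∃ a b : ↥Φ.supp, (¬ ∃ C ∈ Φ.cones, Z2R a.1 ∈ C ∧ Z2R b.1 ∈ C) ∧
        z = Φ.X K a * Φ.X K b} ∪
     {z | ∃ a : ↥Φ.supp, a.1 = 0 ∧ z = Φ.X K a - 1})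

/-- The toric face ring `K[Φ]` of a rational pointed fan `Φ`. -/
def ToricFaceRing := Φ.polyRing K ⧸ Φ.relIdeal K

instance : CommRing (ToricFaceRing K Φ) := Ideal.Quotient.commRing _
instance : Algebra K (ToricFaceRing K Φ) := Ideal.Quotient.algebra K

/-- The monomial `x^a` of the toric face ring. -/
def xpow (a : Fin d → ℤ) : ToricFaceRing K Φ :=
  Ideal.Quotient.mk (Φ.relIdeal K) (Φ.Xaux K a)

/-- A `ℤ^d`-graded (monomial) ideal of the toric face ring. -/
def IsMonomialIdeal (I : Ideal (ToricFaceRing K Φ)) : Prop :=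
  ∃ S : Set (Fin d → ℤ), I = Ideal.span (xpow K Φ '' S)

/-- The graded prime ideal `𝔭_C` associated to a cone. -/
def conePrime (C : Set (Fin d → ℝ)) : Ideal (ToricFaceRing K Φ) :=
  Ideal.span (xpow K Φ '' {a | Z2R a ∉ C})

/-- The graded radical ideal `𝔮_{Σ'}` associated to a collection of cones. -/
def subfanIdeal (T : Set (Set (Fin d → ℝ))) : Ideal (ToricFaceRing K Φ) :=
  Ideal.span (xpow K Φ '' {a | Z2R a ∉ ⋃₀ T})

/-- The graded maximal ideal of the toric face ring. -/
def gradedMaxIdeal : Ideal (ToricFaceRing K Φ) :=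
  Ideal.span (xpow K Φ '' {a | a ≠ 0})

end ToricFaceRing
section AuxLemmas

lemma Z2R_add {d : ℕ} (a b : Fin d → ℤ) : Z2R (a + b) = Z2R a + Z2R b := by
  funext i; simp [Z2R]

lemma conicalHull_zero_mem {d : ℕ} (S : Finset (Fin d → ℝ)) : (0 : Fin d → ℝ) ∈ conicalHull S :=
  ⟨fun _ => 0, fun _ => le_refl _, by simp⟩

lemma conicalHull_add_mem {d : ℕ} (S : Finset (Fin d → ℝ)) {x y : Fin d → ℝ}
    (hx : x ∈ conicalHull S) (hy : y ∈ conicalHull S) : x + y ∈ conicalHull S := by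
  obtain ⟨c, hc, rfl⟩ := hx
  obtain ⟨c', hc', rfl⟩ := hy
  exact ⟨fun v => c v + c' v, fun v => add_nonneg (hc v) (hc' v), by
    rw [← Finset.sum_add_distrib]; exact Finset.sum_congr rfl fun v _ => (add_smul _ _ _).symm⟩

/-- helper: membership in relint via a metric ball in the affine span. -/
lemma mem_relint_of_ball {d : ℕ} {C : Set (Fin d → ℝ)} {x : Fin d → ℝ}
    (hx : x ∈ affineSpan ℝ C) {ε : ℝ} (hε : 0 < ε)
    (h : ∀ z : Fin d → ℝ, z ∈ affineSpan ℝ C → dist z x < ε → z ∈ C) :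
    x ∈ relint C := by
  refine mem_intrinsicInterior.mpr ⟨⟨x, hx⟩, ?_, rfl⟩
  rw [mem_interior_iff_mem_nhds, Metric.mem_nhds_iff]
  refine ⟨ε, hε, ?_⟩
  rintro ⟨z, hz⟩ hzball
  exact h z hz (by simpa [Subtype.dist_eq] using hzball)

lemma mem_relint_ball {d : ℕ} {C : Set (Fin d → ℝ)} {x : Fin d → ℝ} (hx : x ∈ relint C) :
    ∃ hx' : x ∈ affineSpan ℝ C, ∃ ε > 0,
      ∀ z : Fin d → ℝ, z ∈ affineSpan ℝ C → dist z x < ε → z ∈ C := by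
  obtain ⟨⟨y, hy⟩, hyi, rfl⟩ := mem_intrinsicInterior.mp hx
  refine ⟨hy, ?_⟩
  rw [mem_interior_iff_mem_nhds, Metric.mem_nhds_iff] at hyi
  obtain ⟨ε, hε, hball⟩ := hyi
  refine ⟨ε, hε, fun z hz hdz => ?_⟩
  have : (⟨z, hz⟩ : affineSpan ℝ C) ∈ Metric.ball (⟨y, hy⟩ : affineSpan ℝ C) ε := by
    simpa [Subtype.dist_eq] using hdz
  exact hball this

lemma sub_mem_affineSpan {d : ℕ} {C : Set (Fin d → ℝ)} (h0 : (0:Fin d → ℝ) ∈ C)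
    {y z : Fin d → ℝ} (hy : y ∈ affineSpan ℝ C) (hz : z ∈ affineSpan ℝ C) :
    z - y ∈ affineSpan ℝ C := by
  have h0' : (0:Fin d → ℝ) ∈ affineSpan ℝ C := subset_affineSpan ℝ C h0
  have hdir : y - 0 ∈ (affineSpan ℝ C).direction := AffineSubspace.vsub_mem_direction hy h0'
  have := AffineSubspace.vadd_mem_of_mem_direction
    ((affineSpan ℝ C).direction.neg_mem hdir) hz
  simpa [sub_eq_add_neg, vadd_eq_add, add_comm] using this

lemma add_mem_affineSpan {d : ℕ} {C : Set (Fin d → ℝ)} (h0 : (0:Fin d → ℝ) ∈ C)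
    {y z : Fin d → ℝ} (hy : y ∈ affineSpan ℝ C) (hz : z ∈ affineSpan ℝ C) :
    z + y ∈ affineSpan ℝ C := by
  have := sub_mem_affineSpan h0 (sub_mem_affineSpan h0 hy (subset_affineSpan ℝ C h0)) hz
  simpa [sub_eq_add_neg] using this

/-- Key fact: for a cone closed under addition, relint is absorbing under adding cone elements. -/
lemma add_mem_relint {d : ℕ} {C : Set (Fin d → ℝ)}
    (h0 : (0:Fin d → ℝ) ∈ C) (hadd : ∀ x ∈ C, ∀ y ∈ C, x + y ∈ C)
    {x y : Fin d → ℝ} (hx : x ∈ relint C) (hy : y ∈ C) : x + y ∈ relint C := by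
  obtain ⟨hxs, ε, hε, hball⟩ := mem_relint_ball hx
  have hys : y ∈ affineSpan ℝ C := subset_affineSpan ℝ C hy
  refine mem_relint_of_ball (add_mem_affineSpan h0 hys hxs) hε fun z hz hdz => ?_
  have hzy : z - y ∈ affineSpan ℝ C := sub_mem_affineSpan h0 hys hz
  have hdist : dist (z - y) x < ε := by
    rw [dist_eq_norm] at hdz ⊢
    have : z - y - x = z - (x + y) := by ring
    rw [this]; exact hdz
  have := hball (z - y) hzy hdist
  have := hadd _ this y hy
  simpa using this


variable {d : ℕ}

/-- The linear map sending coefficients to the combination. -/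
def comboMap (S : Finset (Fin d → ℝ)) : ((↥S : Type) → ℝ) →ₗ[ℝ] (Fin d → ℝ) where
  toFun c := ∑ v : ↥S, c v • v.1
  map_add' c c' := by simp [add_smul, Finset.sum_add_distrib]
  map_smul' t c := by simp [smul_smul, Finset.smul_sum]

lemma comboMap_mem_conicalHull (S : Finset (Fin d → ℝ)) (c : (↥S : Type) → ℝ)
    (hc : ∀ v, 0 ≤ c v) : comboMap S c ∈ conicalHull S := by
  refine ⟨fun v => if h : v ∈ S then c ⟨v, h⟩ else 0, ?_, ?_⟩
  · intro v; by_cases h : v ∈ S <;> simp [h, hc]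
  · show comboMap S c = _
    rw [comboMap]
    simp only [LinearMap.coe_mk, AddHom.coe_mk]
    show ∑ v : ↥S, c v • v.1 = _
    rw [← Finset.sum_attach S (fun v => (if h : v ∈ S then c ⟨v, h⟩ else 0) • v),
      Finset.univ_eq_attach]
    refine Finset.sum_congr rfl fun v _ => ?_
    rw [dif_pos v.2]

lemma conicalHull_subset_range (S : Finset (Fin d → ℝ)) :
    conicalHull S ⊆ (LinearMap.range (comboMap S) : Set (Fin d → ℝ)) := by
  rintro x ⟨c, hc, rfl⟩
  refine ⟨fun v => c v.1, ?_⟩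
  show ∑ v : ↥S, c v.1 • v.1 = _
  rw [Finset.univ_eq_attach, Finset.sum_attach S (fun v => c v • v)]

lemma exists_lattice_mem_relint {C : Set (Fin d → ℝ)} (h : IsRatCone C) :
    ∃ a : Fin d → ℤ, Z2R a ∈ relint C := by
  obtain ⟨S, hrat, rfl⟩ := h
  -- rational coordinates of b := ∑ v ∈ S, v
  have hq : ∀ i : Fin d, ∃ q : ℚ, ∑ v ∈ S, v i = (q : ℝ) := by
    intro i
    have : ∀ v ∈ S, ∃ q : ℚ, v i = (q : ℝ) := fun v hv => hrat v hv i
    choose f hf using this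
    refine ⟨∑ v ∈ S.attach, f v.1 v.2, ?_⟩
    push_cast
    rw [← Finset.sum_attach S (fun v => v i)]
    exact Finset.sum_congr rfl fun v _ => hf v.1 v.2
  choose Q hQ using hq
  -- common denominator
  set N : ℕ := ∏ i : Fin d, (Q i).den with hN
  have hNpos : 0 < (N:ℝ) := by
    have : 0 < N := Finset.prod_pos fun i _ => (Q i).pos
    exact_mod_cast this
  have hNint : ∀ i, ∃ z : ℤ, (z : ℚ) = (N : ℚ) * Q i := by
    intro i
    obtain ⟨k, hk⟩ : ((Q i).den : ℤ) ∣ (N : ℤ) := by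
      exact_mod_cast Int.natCast_dvd_natCast.mpr (Finset.dvd_prod_of_mem _ (Finset.mem_univ i))
    refine ⟨k * (Q i).num, ?_⟩
    have hdq : ((Q i).den : ℚ) * Q i = (Q i).num := by
      exact Rat.den_mul_eq_num (Q i)
    have hNq : ((N:ℚ)) = ((Q i).den : ℚ) * (k:ℚ) := by exact_mod_cast hk
    push_cast
    rw [hNq, mul_comm ((Q i).den:ℚ) (k:ℚ), mul_assoc, hdq]
  choose a ha using hNint
  refine ⟨a, ?_⟩
  -- Z2R a = N • b where b = ∑ v ∈ S, v
  have hab : Z2R a = ∑ v ∈ S, (N:ℝ) • v := by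
    funext i
    have h1 : ((a i : ℚ) : ℝ) = ((N:ℚ):ℝ) * ((Q i):ℝ) := by exact_mod_cast congrArg (fun q : ℚ => (q:ℝ)) (ha i)
    have : Z2R a i = (N:ℝ) * (Q i : ℝ) := by
      simpa [Z2R] using h1
    rw [this, ← hQ i, Finset.sum_apply]
    rw [Finset.mul_sum]
    exact Finset.sum_congr rfl fun v _ => rfl
  -- the section of comboMap
  set V := LinearMap.range (comboMap S) with hV
  obtain ⟨σ, hσ⟩ := (comboMap S).rangeRestrict.exists_rightInverse_of_surjective
    (LinearMap.range_eq_top.2 (comboMap S).surjective_rangeRestrict)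
  have hσcont : Continuous σ := σ.continuous_of_finiteDimensional
  have h0 : Filter.Tendsto σ (nhds 0) (nhds 0) := by
    have := hσcont.continuousAt (x := 0)
    rwa [ContinuousAt, map_zero] at this
  rw [Metric.tendsto_nhds_nhds] at h0
  obtain ⟨δ, hδ, hδ'⟩ := h0 (1 : ℝ) one_pos
  have hCsub : (conicalHull S : Set (Fin d → ℝ)) ⊆ (V : Set _) := conicalHull_subset_range S
  have hcombo : Z2R a = comboMap S (fun _ => (N:ℝ)) := by
    rw [hab]
    show _ = ∑ v : ↥S, (N:ℝ) • v.1
    rw [Finset.univ_eq_attach, Finset.sum_attach S (fun v => (N:ℝ) • v)]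
  have hb_mem : Z2R a ∈ conicalHull S :=
    hcombo ▸ comboMap_mem_conicalHull S (fun _ => (N:ℝ)) (fun _ => le_of_lt hNpos)
  have hbV : Z2R a ∈ V := hCsub hb_mem
  have hbspan : Z2R a ∈ affineSpan ℝ (conicalHull S) := subset_affineSpan _ _ hb_mem
  refine mem_relint_of_ball hbspan hδ fun z hz hdz => ?_
  have hzV : z ∈ V := by
    have hle : affineSpan ℝ (conicalHull S) ≤ V.toAffineSubspace :=
      affineSpan_le.mpr (fun x hx => Submodule.mem_toAffineSubspace.mpr (hCsub hx))
    exact Submodule.mem_toAffineSubspace.mp (hle hz)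
  set w : V := ⟨z - Z2R a, Submodule.sub_mem V hzV hbV⟩ with hw
  have hwn : dist w 0 < δ := by
    rw [dist_zero_right]
    have : ‖w‖ = ‖z - Z2R a‖ := rfl
    rw [this, ← dist_eq_norm]
    exact hdz
  have hσw : dist (σ w) 0 < 1 := hδ' hwn
  rw [dist_zero_right] at hσw
  have hcoeff : ∀ v : ↥S, 0 ≤ (N:ℝ) + σ w v := by
    intro v
    have h1 : |σ w v| ≤ ‖σ w‖ := by
      rw [← Real.norm_eq_abs]; exact norm_le_pi_norm (σ w) v
    have h2 : (1:ℝ) ≤ N := by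
      have : 1 ≤ N := Nat.one_le_iff_ne_zero.mpr (by positivity)
      exact_mod_cast this
    nlinarith [abs_le.mp (le_of_lt (lt_of_le_of_lt h1 hσw)) |>.1]
  have hTw : comboMap S (σ w) = z - Z2R a := by
    have := congrArg (fun f => (f w : Fin d → ℝ)) hσ
    simpa using this
  have hz' : z = comboMap S (fun v => (N:ℝ) + σ w v) := by
    have : (fun v : ↥S => (N:ℝ) + σ w v) = (fun _ : ↥S => (N:ℝ)) + σ w := rfl
    rw [this, map_add, ← hcombo, hTw]
    abel
  rw [hz']
  exact comboMap_mem_conicalHull S _ hcoeff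



end AuxLemmas

/-- A subfan of a fan, given as a subset of its set of cones that is closed under faces. -/
def IsSubfanSet {d : ℕ} (Φ : Fan d) (T : Set (Set (Fin d → ℝ))) : Prop :=
  T ⊆ Φ.cones ∧ ∀ C ∈ T, ∀ C', IsFaceOf C' C → C' ∈ T

/-- If `I` is a `ℤ^d`-graded ideal of `K[Φ]` such that for every cone `C`
either all lattice points of `relint C` lie in `Supp I = {a | x^a ∈ I}` or none do, then
`Σ' = {C ∈ Φ : relint(C) ∩ ℤ^d ∩ Supp I = ∅}` is a subfan of `Φ`. -/
theorem subfan_of_monomialIdeal_support (K : Type) [Field K] {d : ℕ} (Φ : Fan d)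
    (I : Ideal (ToricFaceRing K Φ)) (hgr : IsMonomialIdeal K Φ I)
    (hdich : ∀ C ∈ Φ.cones,
      ({a : Fin d → ℤ | Z2R a ∈ relint C} ⊆ {a | xpow K Φ a ∈ I}) ∨
      (∀ a : Fin d → ℤ, Z2R a ∈ relint C → xpow K Φ a ∉ I)) :
    IsSubfanSet Φ {C ∈ Φ.cones | ∀ a : Fin d → ℤ, Z2R a ∈ relint C → xpow K Φ a ∉ I} := by
  constructor
  · intro C hC
    exact hC.1
  · rintro C ⟨hCΦ, hCI⟩ C' hface
    refine ⟨Φ.faces_mem C hCΦ C' hface, ?_⟩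
    intro a' ha' haI
    obtain ⟨hratC, hptC⟩ := Φ.pointed C hCΦ
    obtain ⟨S, hSrat, hCS⟩ := hratC
    have h0C : (0 : Fin d → ℝ) ∈ C := hCS ▸ conicalHull_zero_mem S
    have haddC : ∀ x ∈ C, ∀ y ∈ C, x + y ∈ C := by
      rw [hCS]
      exact fun x hx y hy => conicalHull_add_mem S hx hy
    obtain ⟨b, hb⟩ := exists_lattice_mem_relint ⟨S, hSrat, hCS⟩
    have hbC : Z2R b ∈ C := intrinsicInterior_subset hb
    have ha'C : Z2R a' ∈ C := hface.2.1 (intrinsicInterior_subset ha')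
    have hsum : Z2R (b + a') ∈ relint C := by
      rw [Z2R_add]
      exact add_mem_relint h0C haddC hb ha'C
    have hbs : b ∈ Φ.supp := ⟨C, hCΦ, hbC⟩
    have ha's : a' ∈ Φ.supp := ⟨C, hCΦ, ha'C⟩
    have hgen : Φ.X K ⟨b, hbs⟩ * Φ.X K ⟨a', ha's⟩ - Φ.Xaux K (b + a') ∈ Φ.relIdeal K := by
      apply Ideal.subset_span
      refine Set.mem_union_left _ (Set.mem_union_left _ ?_)
      exact ⟨⟨b, hbs⟩, ⟨a', ha's⟩, ⟨C, hCΦ, hbC, ha'C⟩, rfl⟩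
    have hmul : xpow K Φ (b + a') = xpow K Φ b * xpow K Φ a' := by
      have hXb : Φ.Xaux K b = Φ.X K ⟨b, hbs⟩ := by unfold Fan.Xaux; exact dif_pos hbs
      have hXa : Φ.Xaux K a' = Φ.X K ⟨a', ha's⟩ := by unfold Fan.Xaux; exact dif_pos ha's
      show Ideal.Quotient.mk (Φ.relIdeal K) (Φ.Xaux K (b + a')) =
        Ideal.Quotient.mk (Φ.relIdeal K) (Φ.Xaux K b) * Ideal.Quotient.mk (Φ.relIdeal K) (Φ.Xaux K a')
      rw [hXb, hXa, ← _root_.map_mul (Ideal.Quotient.mk (Φ.relIdeal K)), Ideal.Quotient.eq]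
      have heq : Φ.Xaux K (b + a') - Φ.X K ⟨b, hbs⟩ * Φ.X K ⟨a', ha's⟩ =
          -(Φ.X K ⟨b, hbs⟩ * Φ.X K ⟨a', ha's⟩ - Φ.Xaux K (b + a')) := by ring
      rw [heq]
      exact (Φ.relIdeal K).neg_mem hgen
    exact hCI (b + a') hsum (hmul ▸ I.mul_mem_left (xpow K Φ b) haI)
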